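/- The restricted optimal cost function Ĵ belongs to the set Ŵ; moreover, for every function J : X → [0,∞] satisfying 0 ≤ J ≤ c·Ĵ for some c > 0, one has E^π_{x₀}[J(x_k)] → 0 as k → ∞ for every (π,x₀) ∈ C, so that any such J with J(t)=0 and Ĵ ≤ J belongs to Ŵ. -/

import Mathlib

open scoped ENNReal
open Filter
open scoped Classical NNReal

/-- A stochastic shortest path (SSP) problem with state space `X`, control space `U`,
countable disturbance space `W`, a cost-free absorbing termination state `t`,
nonempty control constraint sets `Uc x ⊆ U`, disturbance distributions `P x u`,
system function `f`, and nonnegative (finite-valued) cost per stage `g`. -/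
structure SSP (X U W : Type*) [Countable W] where
  t : X
  Uc : X → Set U
  Uc_nonempty : ∀ x, (Uc x).Nonempty
  P : X → U → PMF W
  f : X → U → W → X
  g : X → U → W → ℝ≥0∞
  g_lt_top : ∀ x u w, g x u w < ⊤
  f_absorb : ∀ u ∈ Uc t, ∀ w, f t u w = t
  g_zero : ∀ u ∈ Uc t, ∀ w, g t u w = 0

namespace SSP

variable {X U W : Type*} [Countable W] (S : SSP X U W)

/-- A policy `π = (μ₀, μ₁, …)` is admissible if `μ_k(x) ∈ U(x)` for all `k, x`. -/
def IsPolicy (π : ℕ → X → U) : Prop := ∀ k x, π k x ∈ S.Uc x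

/-- Distribution of the state `x_k` after `k` steps under policy `π` starting from `x₀`. -/
noncomputable def stateDist (π : ℕ → X → U) (x₀ : X) : ℕ → PMF X
  | 0 => PMF.pure x₀
  | k + 1 => (stateDist π x₀ k).bind fun x => (S.P x (π k x)).map (S.f x (π k x))

/-- Expected value `E^π_{x₀}[J(x_k)]` of a nonnegative function along the trajectory. -/
noncomputable def expect (π : ℕ → X → U) (x₀ : X) (k : ℕ) (J : X → ℝ≥0∞) : ℝ≥0∞ :=
  ∑' x, S.stateDist π x₀ k x * J x

/-- Expected cost `E^π_{x₀}[g(x_k, μ_k(x_k), w_k)]` of the `k`-th stage. -/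
noncomputable def stageCost (π : ℕ → X → U) (x₀ : X) (k : ℕ) : ℝ≥0∞ :=
  S.expect π x₀ k fun x => ∑' w, S.P x (π k x) w * S.g x (π k x) w

/-- The cost `J_π(x₀) = Σ_{k≥0} E^π_{x₀}[g(x_k, μ_k(x_k), w_k)]` of a policy. -/
noncomputable def Jcost (π : ℕ → X → U) (x₀ : X) : ℝ≥0∞ :=
  ∑' k, S.stageCost π x₀ k

/-- `r_k(π, x₀)`: probability that `x_k ≠ t` under `π` starting from `x₀`. -/
noncomputable def r (π : ℕ → X → U) (x₀ : X) (k : ℕ) : ℝ≥0∞ :=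
  S.expect π x₀ k fun x => if x = S.t then 0 else 1

/-- `Σ_{k≥0} r_k(π,x₀)`: expected number of steps to reach the destination. -/
noncomputable def N (π : ℕ → X → U) (x₀ : X) : ℝ≥0∞ := ∑' k, S.r π x₀ k

/-- A policy is proper at `x` if it is admissible, `J_π(x) < ∞` and `Σ_k r_k(π,x) < ∞`. -/
def ProperAt (π : ℕ → X → U) (x : X) : Prop :=
  S.IsPolicy π ∧ S.Jcost π x < ⊤ ∧ S.N π x < ⊤

/-- The optimal cost function `J*`. -/
noncomputable def Jstar (x : X) : ℝ≥0∞ := ⨅ π ∈ {π | S.IsPolicy π}, S.Jcost π x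

/-- The restricted optimal cost function `Ĵ` over policies proper at `x`
(infimum over the empty set is `∞`). -/
noncomputable def Jhat (x : X) : ℝ≥0∞ := ⨅ π ∈ {π | S.ProperAt π x}, S.Jcost π x

/-- The effective domain `X̂ = {x | Ĵ(x) < ∞}` of `Ĵ`. -/
def Xhat : Set X := {x | S.Jhat x < ⊤}

/-- Expected `k`-th stage cost in the `δ`-perturbed problem (stage cost `g + δ` off `t`). -/
noncomputable def stageCostPert (δ : ℝ≥0∞) (π : ℕ → X → U) (x₀ : X) (k : ℕ) : ℝ≥0∞ :=
  S.expect π x₀ k fun x =>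
    ∑' w, S.P x (π k x) w * (S.g x (π k x) w + if x = S.t then 0 else δ)

/-- The cost `J_{π,δ}` of a policy in the `δ`-perturbed problem. -/
noncomputable def Jpert (δ : ℝ≥0∞) (π : ℕ → X → U) (x₀ : X) : ℝ≥0∞ :=
  ∑' k, S.stageCostPert δ π x₀ k

/-- The optimal cost function `Ĵ_δ` of the `δ`-perturbed problem. -/
noncomputable def JhatPert (δ : ℝ≥0∞) (x : X) : ℝ≥0∞ :=
  ⨅ π ∈ {π | S.IsPolicy π}, S.Jpert δ π x

/-- `Q J x u = E_{w∼P(·|x,u)}[g(x,u,w) + J(f(x,u,w))]`. -/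
noncomputable def Q (J : X → ℝ≥0∞) (x : X) (u : U) : ℝ≥0∞ :=
  ∑' w, S.P x u w * (S.g x u w + J (S.f x u w))

/-- The Bellman operator `(TJ)(x) = inf_{u ∈ U(x)} E[g(x,u,w) + J(f(x,u,w))]`. -/
noncomputable def bellman (J : X → ℝ≥0∞) (x : X) : ℝ≥0∞ := ⨅ u ∈ S.Uc x, S.Q J x u

/-- The tail policy `π_k = (μ_k, μ_{k+1}, …)`. -/
def tail (π : ℕ → X → U) (k : ℕ) : ℕ → X → U := fun m => π (k + m)

/-- The set `Ŵ` of functions `J` with `J(t) = 0`, `Ĵ ≤ J`, and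
`E^π_{x₀}[J(x_k)] → 0` for every pair `(π, x₀)` with `π` proper at `x₀`. -/
def What : Set (X → ℝ≥0∞) :=
  {J | J S.t = 0 ∧ S.Jhat ≤ J ∧
    ∀ π x₀, S.ProperAt π x₀ → Tendsto (fun k => S.expect π x₀ k J) atTop (nhds 0)}

/-- The set `B` of functions `J` with `J(t) = 0` that are bounded over `X̂`. -/
def Bset : Set (X → ℝ≥0∞) :=
  {J | J S.t = 0 ∧ (⨆ x ∈ S.Xhat, J x) < ⊤}

/-- A policy is uniformly proper if it is admissible and the expected number of steps
to reach the destination is uniformly bounded over `X̂`. -/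
def UniformlyProper (π : ℕ → X → U) : Prop :=
  S.IsPolicy π ∧ (⨆ x ∈ S.Xhat, S.N π x) < ⊤

/-- The cost per stage `g` is (uniformly) bounded over `X × U × W`. -/
def BoundedCost : Prop := ∃ b : ℝ≥0∞, b < ⊤ ∧ ∀ x u w, S.g x u w ≤ b

end SSP

/-!
If `π` is proper at `x₀`, then so is every tail policy `π_k` at every state `x` that `x_k` reaches
with positive probability, because the cost and the expected number of remaining steps of `π_k`,
averaged over the law of `x_k`, are tails of the finite series defining `J_π(x₀)` and `N_π(x₀)`.
Hence `E[Ĵ(x_k)] ≤ E[J_{π_k}(x_k)] = Σ_{m ≥ k} E[g(x_m, μ_m(x_m), w_m)]`, the tail of a convergent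
series, which tends to `0`; a function `J ≤ c Ĵ` inherits this.
-/

theorem PMF.tsum_bind_mul {α β : Type*} (p : PMF α) (q : α → PMF β) (J : β → ℝ≥0∞) :
    ∑' y, p.bind q y * J y = ∑' x, p x * ∑' y, q x y * J y := by
  simp_rw [PMF.bind_apply, ← ENNReal.tsum_mul_right, ← ENNReal.tsum_mul_left, mul_assoc]
  exact ENNReal.tsum_comm

theorem PMF.tsum_pure_mul {α : Type*} (a : α) (J : α → ℝ≥0∞) :
    ∑' x, PMF.pure a x * J x = J a := by
  simp [PMF.pure_apply]

theorem ENNReal.tsum_nat_add_le_tsum (f : ℕ → ℝ≥0∞) (k : ℕ) : ∑' m, f (k + m) ≤ ∑' m, f m :=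
  ENNReal.tsum_comp_le_tsum_of_injective (add_right_injective k) f

namespace SSP

variable {X U W : Type*} [Countable W] (S : SSP X U W)

theorem stateDist_add (π : ℕ → X → U) (x₀ : X) (k m : ℕ) :
    S.stateDist π x₀ (k + m) = (S.stateDist π x₀ k).bind fun x => S.stateDist (tail π k) x m := by
  induction m with
  | zero => simp [stateDist]
  | succ m ih =>
    rw [← add_assoc, stateDist, ih, PMF.bind_bind]
    rfl

theorem expect_mono (π : ℕ → X → U) (x₀ : X) (k : ℕ) {J J' : X → ℝ≥0∞} (h : J ≤ J') :
    S.expect π x₀ k J ≤ S.expect π x₀ k J' :=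
  ENNReal.tsum_le_tsum fun x => mul_le_mul_right (h x) _

theorem expect_const_mul (π : ℕ → X → U) (x₀ : X) (k : ℕ) (c : ℝ≥0∞) (J : X → ℝ≥0∞) :
    S.expect π x₀ k (fun x => c * J x) = c * S.expect π x₀ k J := by
  simp_rw [expect, ← ENNReal.tsum_mul_left, mul_left_comm]

theorem expect_add (π : ℕ → X → U) (x₀ : X) (k m : ℕ) (J : X → ℝ≥0∞) :
    S.expect π x₀ (k + m) J = S.expect π x₀ k fun x => S.expect (tail π k) x m J := by
  rw [expect, stateDist_add, PMF.tsum_bind_mul]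
  rfl

theorem tsum_stageCost_add (π : ℕ → X → U) (x₀ : X) (k : ℕ) :
    ∑' m, S.stageCost π x₀ (k + m) = S.expect π x₀ k fun x => S.Jcost (tail π k) x := by
  simp_rw [stageCost, expect_add, expect, Jcost, stageCost, expect, ← ENNReal.tsum_mul_left]
  exact ENNReal.tsum_comm

theorem tsum_r_add (π : ℕ → X → U) (x₀ : X) (k : ℕ) :
    ∑' m, S.r π x₀ (k + m) = S.expect π x₀ k fun x => S.N (tail π k) x := by
  simp_rw [r, expect_add, expect, N, r, expect, ← ENNReal.tsum_mul_left]
  exact ENNReal.tsum_comm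

theorem lt_top_of_expect_lt_top {π : ℕ → X → U} {x₀ x : X} {k : ℕ} {F : X → ℝ≥0∞}
    (hF : S.expect π x₀ k F < ⊤) (hx : S.stateDist π x₀ k x ≠ 0) : F x < ⊤ := by
  have hle : S.stateDist π x₀ k x * F x < ⊤ := (ENNReal.le_tsum x).trans_lt hF
  exact ENNReal.lt_top_of_mul_ne_top_right hle.ne hx

variable {S} in
theorem ProperAt.tail {π : ℕ → X → U} {x₀ x : X} {k : ℕ} (hp : S.ProperAt π x₀)
    (hx : S.stateDist π x₀ k x ≠ 0) : S.ProperAt (tail π k) x := by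
  obtain ⟨hpol, hJ, hN⟩ := hp
  refine ⟨fun m y => hpol (k + m) y, S.lt_top_of_expect_lt_top ?_ hx,
    S.lt_top_of_expect_lt_top ?_ hx⟩
  · rw [← tsum_stageCost_add]
    exact (ENNReal.tsum_nat_add_le_tsum _ k).trans_lt hJ
  · rw [← tsum_r_add]
    exact (ENNReal.tsum_nat_add_le_tsum _ k).trans_lt hN

theorem expect_Jhat_le_tsum_stageCost {π : ℕ → X → U} {x₀ : X} (hp : S.ProperAt π x₀) (k : ℕ) :
    S.expect π x₀ k S.Jhat ≤ ∑' m, S.stageCost π x₀ (k + m) := by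
  rw [tsum_stageCost_add]
  refine ENNReal.tsum_le_tsum fun x => ?_
  by_cases hx : S.stateDist π x₀ k x = 0
  · simp [hx]
  · exact mul_le_mul_right (iInf₂_le (tail π k) (hp.tail hx)) _

theorem tendsto_expect_Jhat {π : ℕ → X → U} {x₀ : X} (hp : S.ProperAt π x₀) :
    Tendsto (fun k => S.expect π x₀ k S.Jhat) atTop (nhds 0) := by
  have htail : Tendsto (fun k => ∑' m, S.stageCost π x₀ (k + m)) atTop (nhds 0) := by
    simpa only [add_comm] using ENNReal.tendsto_sum_nat_add _ hp.2.1.ne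
  exact tendsto_of_tendsto_of_tendsto_of_le_of_le tendsto_const_nhds htail
    (fun _ => zero_le) (S.expect_Jhat_le_tsum_stageCost hp)

theorem tendsto_expect_of_le_const_mul_Jhat {π : ℕ → X → U} {x₀ : X} (hp : S.ProperAt π x₀)
    {J : X → ℝ≥0∞} {c : ℝ≥0∞} (hc : c ≠ ⊤) (hJ : ∀ x, J x ≤ c * S.Jhat x) :
    Tendsto (fun k => S.expect π x₀ k J) atTop (nhds 0) := by
  have hbound : Tendsto (fun k => c * S.expect π x₀ k S.Jhat) atTop (nhds 0) := by
    simpa using ENNReal.Tendsto.const_mul (S.tendsto_expect_Jhat hp) (Or.inr hc)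
  refine tendsto_of_tendsto_of_tendsto_of_le_of_le tendsto_const_nhds hbound
    (fun _ => zero_le) fun k => ?_
  rw [← expect_const_mul]
  exact S.expect_mono π x₀ k hJ

theorem stateDist_t {π : ℕ → X → U} (hπ : S.IsPolicy π) (k : ℕ) :
    S.stateDist π S.t k = PMF.pure S.t := by
  induction k with
  | zero => rfl
  | succ k ih =>
    have hf : S.f S.t (π k S.t) = Function.const W S.t :=
      funext (S.f_absorb _ (hπ k S.t))
    rw [stateDist, ih, PMF.pure_bind, hf, PMF.map_const]

theorem expect_t {π : ℕ → X → U} (hπ : S.IsPolicy π) (k : ℕ) (J : X → ℝ≥0∞) :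
    S.expect π S.t k J = J S.t := by
  rw [expect, S.stateDist_t hπ, PMF.tsum_pure_mul]

theorem Jhat_t_eq_zero : S.Jhat S.t = 0 := by
  let π : ℕ → X → U := fun _ x => (S.Uc_nonempty x).choose
  have hπ : S.IsPolicy π := fun _ x => (S.Uc_nonempty x).choose_spec
  have hJ : S.Jcost π S.t = 0 := by
    simp [Jcost, stageCost, S.expect_t hπ, S.g_zero _ (hπ _ S.t)]
  have hN : S.N π S.t = 0 := by
    simp [N, r, S.expect_t hπ]
  have hp : S.ProperAt π S.t := ⟨hπ, by simp [hJ], by simp [hN]⟩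
  exact le_antisymm (hJ ▸ iInf₂_le π hp) zero_le

end SSP

/-- `Ĵ ∈ Ŵ`; moreover every `J` with `0 ≤ J ≤ c·Ĵ` for some `c > 0`
satisfies `E^π_{x₀}[J(x_k)] → 0` for all `(π,x₀) ∈ C`, so that any such `J` with
`J(t) = 0` and `Ĵ ≤ J` belongs to `Ŵ`. -/
theorem Jhat_mem_What {X U W : Type*} [Countable W] (S : SSP X U W) :
    S.Jhat ∈ S.What ∧
    ∀ J : X → ℝ≥0∞, (∃ c : ℝ≥0, 0 < c ∧ ∀ x, J x ≤ (c : ℝ≥0∞) * S.Jhat x) →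
      ((∀ π x₀, S.ProperAt π x₀ →
          Tendsto (fun k => S.expect π x₀ k J) atTop (nhds 0)) ∧
        (J S.t = 0 → S.Jhat ≤ J → J ∈ S.What)) := by
  refine ⟨⟨S.Jhat_t_eq_zero, le_rfl, fun _ _ => S.tendsto_expect_Jhat⟩, ?_⟩
  rintro J ⟨c, -, hJ⟩
  have htendsto : ∀ π x₀, S.ProperAt π x₀ → Tendsto (fun k => S.expect π x₀ k J) atTop (nhds 0) :=
    fun _ _ hp => S.tendsto_expect_of_le_const_mul_Jhat hp ENNReal.coe_ne_top hJ
  exact ⟨htendsto, fun ht hle => ⟨ht, hle, htendsto⟩⟩
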